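/- With the setup of the masked value-difference identity, if the π-weighted sum of advantages over the pruned actions is nonpositive, i.e., ∑_a (1 − E(a)) π(a)(Q(a) − V) ≤ 0, then the masked policy's expected value satisfies ∑_a π_E(a) Q(a) ≥ V = ∑_a π(a) Q(a). -/

import Mathlib

open Finset

section MaskedPolicy

variable {A : Type*} [Fintype A]

theorem sum_div_sum_mul (w Q : A → ℝ) :
    ∑ a, w a / (∑ a', w a') * Q a = (∑ a, w a * Q a) / ∑ a', w a' := by
  rw [Finset.sum_div]
  exact Finset.sum_congr rfl fun a _ => div_mul_eq_mul_div _ _ _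

/-- Splitting `1 - E a` makes the pruned advantages the full advantages (which sum to `0`)
minus the kept ones. -/
theorem sum_pruned_advantage (π E Q : A → ℝ) (hπ1 : ∑ a, π a = 1) :
    ∑ a, (1 - E a) * π a * (Q a - ∑ a', π a' * Q a')
      = (∑ a', π a' * Q a') * (∑ a', π a' * E a') - ∑ a, π a * E a * Q a := by
  set V := ∑ a', π a' * Q a'
  have split : ∀ a, (1 - E a) * π a * (Q a - V)
      = (π a * Q a - V * π a) - (π a * E a * Q a - V * (π a * E a)) := fun a => by ring
  simp only [split, Finset.sum_sub_distrib, ← Finset.mul_sum, hπ1]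
  ring

theorem masked_value_sub_value (π E Q : A → ℝ) (hπ1 : ∑ a, π a = 1)
    (hZ : ∑ a, π a * E a ≠ 0) :
    ∑ a, (π a * E a / (∑ a', π a' * E a')) * Q a - ∑ a, π a * Q a
      = -(∑ a, (1 - E a) * π a * (Q a - ∑ a', π a' * Q a')) / ∑ a, π a * E a := by
  rw [sum_div_sum_mul (fun a => π a * E a), sum_pruned_advantage π E Q hπ1]
  field_simp
  ring

end MaskedPolicy

theorem masked_value_improvement_general
    {A : Type*} [Fintype A]
    (π E Q : A → ℝ)
    (hπ1 : ∑ a, π a = 1)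
    (hZ : 0 < ∑ a, π a * E a)
    (hadv : ∑ a, (1 - E a) * π a * (Q a - ∑ a', π a' * Q a') ≤ 0) :
    (∑ a, π a * Q a) ≤ ∑ a, (π a * E a / (∑ a', π a' * E a')) * Q a := by
  have gain := masked_value_sub_value π E Q hπ1 hZ.ne'
  have : 0 ≤ -(∑ a, (1 - E a) * π a * (Q a - ∑ a', π a' * Q a')) / ∑ a, π a * E a :=
    div_nonneg (neg_nonneg.mpr hadv) hZ.le
  linarith

theorem masked_value_improvement
    {A : Type*} [Fintype A] [Nonempty A]
    (π E Q : A → ℝ)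
    (hπ0 : ∀ a, 0 ≤ π a) (hπ1 : ∑ a, π a = 1)
    (hE : ∀ a, E a = 0 ∨ E a = 1)
    (hZ : 0 < ∑ a, π a * E a)
    (hadv : ∑ a, (1 - E a) * π a * (Q a - ∑ a', π a' * Q a') ≤ 0) :
    (∑ a, π a * Q a) ≤ ∑ a, (π a * E a / (∑ a', π a' * E a')) * Q a :=
  masked_value_improvement_general π E Q hπ1 hZ hadv
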